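/- Let d, c1, w : ℤ with w ≥ 1 and d ≥ c1, and let n : ℤ with n ≥ 1 satisfy d − n·w < c1 and d − (n−1)·w ≥ c1 (i.e., d − n·w is the first value of the progression d, d−w, d−2w, … that falls below c1). Then d − n·w = (c1 − w) + ((d − c1) % w), where % denotes the remainder of integer division by w (taken in [0, w)). -/

import Mathlib

/-! The last value `d - (n - 1) * w` still above the threshold lies in `[c1, c1 + w)`, so
`d - c1 - (n - 1) * w` is the remainder of `d - c1` modulo `w`; one more step subtracts `w`. -/

theorem Int.emod_eq_sub_mul_of_nonneg_of_lt {a b k : ℤ} (h0 : 0 ≤ a - k * b) (h1 : a - k * b < b) :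
    a % b = a - k * b :=
  ((Int.ediv_emod_unique (q := k) (r := a - k * b) (by linarith)).mpr ⟨by ring, h0, h1⟩).2

theorem psi_a'_formula_general (d c1 w n : ℤ)
    (hlt : d - n * w < c1) (hge : d - (n - 1) * w ≥ c1) :
    d - n * w = (c1 - w) + ((d - c1) % w) := by
  rw [Int.emod_eq_sub_mul_of_nonneg_of_lt (k := n - 1) (by linarith) (by linarith)]
  ring

/-- Formula ψ'_a of §4.1 (case ∼_B = '≥'): the first value of the
progression d, d−w, d−2w, … falling below c1 equals (c1 − w) + ((d − c1) % w). -/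
theorem psi_a'_formula (d c1 w n : ℤ)
    (hw : w ≥ 1) (hd : d ≥ c1) (hn : n ≥ 1)
    (hlt : d - n * w < c1) (hge : d - (n - 1) * w ≥ c1) :
    d - n * w = (c1 - w) + ((d - c1) % w) :=
  psi_a'_formula_general d c1 w n hlt hge
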